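/- The trail append operation (implemented as function composition on CPS trail representations) is well-typed with respect to the compatible relation: if t₁ : μ₁*, t₂ : μ₂*, and compatible(μ₁, μ₂, μ₃), then the appended trail t₁ @ t₂ has type μ₃* in the target calculus λ_C, where μ* denotes the CPS translation of trail types (•_μ* = unit and (τ₁⟨μ,σ⟩τ₂)* = τ₁* → μ* → σ* → τ₂*). -/
import Mathlib


namespace Trail15

/- The source calculus λ_D: types, trail types, meta-continuation types,
   terms with the four delimited control operators, the typing constraints
   `compatible` and `id-cont-type`, and the type system of λ_D. -/

mutual
inductive Ty : Type
  | nat : Ty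
  | arrow : Ty → Ty → Tr → Mc → Ty → Tr → Mc → Ty → Ty
inductive Tr : Type
  | empty : Tr
  | tr : Ty → Tr → Mc → Ty → Tr
inductive Mc : Type
  | empty : Mc
  | cons : Ty → Tr → Mc → Ty → Tr → Mc → Mc
end

inductive Compatible : Tr → Tr → Tr → Type
  | leftEmpty (μ : Tr) : Compatible .empty μ μ
  | rightEmpty (μ : Tr) : Compatible μ .empty μ
  | cons {τ1 : Ty} {μ1 : Tr} {σ1 : Mc} {τ1' τ2 : Ty} {μ2 : Tr} {σ2 : Mc} {τ2' : Ty} {μ3 : Tr} :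
      Compatible (.tr τ2 μ2 σ2 τ2') μ3 μ1 →
      Compatible (.tr τ1 μ1 σ1 τ1') (.tr τ2 μ2 σ2 τ2') (.tr τ1 μ3 σ1 τ1')

inductive IdContType : Ty → Tr → Mc → Ty → Type
  | idEmpty (γ : Ty) : IdContType γ .empty .empty γ
  | idTrail (γ : Ty) (σ : Mc) (γ' : Ty) : IdContType γ (.tr γ .empty σ γ') σ γ'
  | idMeta (γ : Ty) (μ0 : Tr) (σ0 : Mc) (γ' : Ty) :
      IdContType γ .empty (.cons γ μ0 σ0 γ' μ0 σ0) γ'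


/- The target calculus λ_C: simply-typed λ-calculus with unit and pairs,
   its typing judgment, the CPS translation of λ_D types, and the
   (type-directed) CPS interpreter translating λ_D into λ_C. -/

inductive CTy : Type
  | nat : CTy
  | unit : CTy
  | arrow : CTy → CTy → CTy
  | prod : CTy → CTy → CTy

mutual
def cpsTy : Ty → CTy
  | .nat => .nat
  | .arrow t1 t2 μα σα a μβ σβ b =>
      .arrow (cpsTy t1)
        (.arrow (.arrow (cpsTy t2) (.arrow (cpsTr μα) (.arrow (cpsMc σα) (cpsTy a))))
          (.arrow (cpsTr μβ) (.arrow (cpsMc σβ) (cpsTy b))))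
def cpsTr : Tr → CTy
  | .empty => .unit
  | .tr t1 μ σ t2 => .arrow (cpsTy t1) (.arrow (cpsTr μ) (.arrow (cpsMc σ) (cpsTy t2)))
def cpsMc : Mc → CTy
  | .empty => .unit
  | .cons t1 μ1 σ1 t2 μ σ =>
      .prod (.prod (.arrow (cpsTy t1) (.arrow (cpsTr μ1) (.arrow (cpsMc σ1) (cpsTy t2))))
          (cpsTr μ))
        (cpsMc σ)
end

inductive CTm : Type
  | var : ℕ → CTm
  | num : ℕ → CTm
  | unit : CTm
  | lam : CTm → CTm
  | app : CTm → CTm → CTm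
  | pair : CTm → CTm → CTm
  | fst : CTm → CTm
  | snd : CTm → CTm

def liftR (f : ℕ → ℕ) : ℕ → ℕ
  | 0 => 0
  | n + 1 => f n + 1

def rename (f : ℕ → ℕ) : CTm → CTm
  | .var n => .var (f n)
  | .num n => .num n
  | .unit => .unit
  | .lam e => .lam (rename (liftR f) e)
  | .app a b => .app (rename f a) (rename f b)
  | .pair a b => .pair (rename f a) (rename f b)
  | .fst a => .fst (rename f a)
  | .snd a => .snd (rename f a)

def liftS (s : ℕ → CTm) : ℕ → CTm
  | 0 => .var 0
  | n + 1 => rename (· + 1) (s n)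

def subst (s : ℕ → CTm) : CTm → CTm
  | .var n => s n
  | .num n => .num n
  | .unit => .unit
  | .lam e => .lam (subst (liftS s) e)
  | .app a b => .app (subst s a) (subst s b)
  | .pair a b => .pair (subst s a) (subst s b)
  | .fst a => .fst (subst s a)
  | .snd a => .snd (subst s a)

/-- Typing judgment of λ_C. -/
inductive CHasTy : List CTy → CTm → CTy → Prop
  | var {Γ : List CTy} {n : ℕ} {A : CTy} : Γ[n]? = some A → CHasTy Γ (.var n) A
  | num {Γ : List CTy} {n : ℕ} : CHasTy Γ (.num n) .nat
  | unit {Γ : List CTy} : CHasTy Γ .unit .unit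
  | lam {Γ : List CTy} {e : CTm} {A B : CTy} : CHasTy (A :: Γ) e B → CHasTy Γ (.lam e) (.arrow A B)
  | app {Γ : List CTy} {f a : CTm} {A B : CTy} :
      CHasTy Γ f (.arrow A B) → CHasTy Γ a A → CHasTy Γ (.app f a) B
  | pair {Γ : List CTy} {a b : CTm} {A B : CTy} :
      CHasTy Γ a A → CHasTy Γ b B → CHasTy Γ (.pair a b) (.prod A B)
  | fst {Γ : List CTy} {a : CTm} {A B : CTy} : CHasTy Γ a (.prod A B) → CHasTy Γ (.fst a) A
  | snd {Γ : List CTy} {a : CTm} {A B : CTy} : CHasTy Γ a (.prod A B) → CHasTy Γ (.snd a) B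

def lam3 (b : CTm) : CTm := .lam (.lam (.lam b))

def app3 (f a b c : CTm) : CTm := .app (.app (.app f a) b) c

/-- The trail cons operation `k :: t` (function composition), defined by
    recursion on the compatibility constraint. -/
def consTm : {μ1 μ2 μ3 : Tr} → Compatible μ1 μ2 μ3 → CTm → CTm → CTm
  | _, _, _, .leftEmpty _, _, t => t
  | _, _, _, .rightEmpty _, k, _ => k
  | _, _, _, .cons c, k, t =>
      lam3 (app3 (rename (· + 3) k) (.var 2) (consTm c (rename (· + 3) t) (.var 1)) (.var 0))

/-- The trail append operation `t1 @ t2` (function composition). -/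
def appendTm : {μ1 μ2 μ3 : Tr} → Compatible μ1 μ2 μ3 → CTm → CTm → CTm
  | _, _, _, .leftEmpty _, _, t2 => t2
  | _, _, _, .rightEmpty _, t1, _ => t1
  | _, _, _, c@(.cons _), t1, t2 => consTm c t1 t2

/-- The initial continuation id-k = λv.λt.λm. case (t, m) of ..., defined by
    case analysis along the id-cont-type constraint. -/
def idkTm : {γ : Ty} → {μ : Tr} → {σ : Mc} → {γ' : Ty} → IdContType γ μ σ γ' → CTm
  | _, _, _, _, .idEmpty _ => lam3 (.var 2)
  | _, _, _, _, .idTrail _ _ _ => lam3 (app3 (.var 1) (.var 2) .unit (.var 0))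
  | _, _, _, _, .idMeta _ _ _ _ =>
      lam3 (app3 (.fst (.fst (.var 0))) (.var 2) (.snd (.fst (.var 0))) (.snd (.var 0)))



theorem rename_wt {Γ : List CTy} {e : CTm} {A : CTy} (h : CHasTy Γ e A) :
    ∀ {Γ' : List CTy} (f : ℕ → ℕ), (∀ n B, Γ[n]? = some B → Γ'[f n]? = some B) →
    CHasTy Γ' (rename f e) A := by
  induction h with
  | var hn => intro Γ' f hf; exact .var (hf _ _ hn)
  | num => intro Γ' f hf; exact .num
  | unit => intro Γ' f hf; exact .unit
  | lam _ ih =>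
    intro Γ' f hf
    refine .lam (ih (liftR f) ?_)
    rintro (_|n) B hB
    · simpa [liftR] using hB
    · simpa [liftR] using hf n B (by simpa using hB)
  | app _ _ ih1 ih2 => intro Γ' f hf; exact .app (ih1 f hf) (ih2 f hf)
  | pair _ _ ih1 ih2 => intro Γ' f hf; exact .pair (ih1 f hf) (ih2 f hf)
  | fst _ ih => intro Γ' f hf; exact .fst (ih f hf)
  | snd _ ih => intro Γ' f hf; exact .snd (ih f hf)

theorem weaken3 {Γ : List CTy} {A B C D : CTy} {e : CTm} (h : CHasTy Γ e D) :
    CHasTy (A :: B :: C :: Γ) (rename (· + 3) e) D := by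
  refine rename_wt h _ ?_
  intro n E hE
  simpa using hE

theorem cons_well_typed {μ1 μ2 μ3 : Tr} (c : Compatible μ1 μ2 μ3) {Δ : List CTy}
    {t1 t2 : CTm} (h1 : CHasTy Δ t1 (cpsTr μ1)) (h2 : CHasTy Δ t2 (cpsTr μ2)) :
    CHasTy Δ (consTm c t1 t2) (cpsTr μ3) := by
  induction c generalizing Δ t1 t2 with
  | leftEmpty => exact h2
  | rightEmpty => exact h1
  | cons c ih =>
    refine .lam (.lam (.lam ?_))
    refine .app (.app (.app (weaken3 h1) (.var (by simp))) ?_) (.var (by simp))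
    exact ih (weaken3 h2) (.var (by simp))

/-- The trail append operation (function composition on CPS trail
    representations) preserves types with respect to the compatible
    relation: if t₁ : μ₁*, t₂ : μ₂*, and compatible(μ₁, μ₂, μ₃), then
    t₁ @ t₂ : μ₃* in λ_C. -/
theorem append_well_typed {μ1 μ2 μ3 : Tr} (c : Compatible μ1 μ2 μ3) {Δ : List CTy}
    {t1 t2 : CTm} (h1 : CHasTy Δ t1 (cpsTr μ1)) (h2 : CHasTy Δ t2 (cpsTr μ2)) :
    CHasTy Δ (appendTm c t1 t2) (cpsTr μ3) := by
  cases c with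
  | leftEmpty => exact h2
  | rightEmpty => exact h1
  | cons c => exact cons_well_typed (.cons c) h1 h2


end Trail15
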